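/- Let 2 ≤ d1 ≤ d2 and T = d1 + d2 − 1. Let A = UΛU* be a positive semidefinite real n×n matrix with positive eigenvalues λ_1,…,λ_r and orthonormal eigenvectors u_1,…,u_r, and let U_H = V_{d1}(U,Λ)(Λ̄^{d1})^{−1} and V_H = V_{d2}(U,Λ)(Λ̄^{d2})^{−1} be the singular vector matrices of H(Q_T(A)). Then for all i, j ∈ [n] and t ∈ [T]: ‖U_H* B_{i,j,t}‖_F² equals Σ_{ℓ=1}^r (Σ_{s=0}^{t−1} λ_ℓ^{2s})/(Σ_{s=0}^{d1−1} λ_ℓ^{2s}) · (u_ℓ)_i²/t if t < d1; Σ_{ℓ=1}^r (u_ℓ)_i²/d1 if d1 ≤ t ≤ d2; and Σ_{ℓ=1}^r (Σ_{s=t−d2}^{d1−1} λ_ℓ^{2s})/(Σ_{s=0}^{d1−1} λ_ℓ^{2s}) · (u_ℓ)_i²/(T+1−t) if t > d2. Likewise, ‖B_{i,j,t} V_H‖_F² equals Σ_{ℓ=1}^r (Σ_{s=0}^{t−1} λ_ℓ^{2s})/(Σ_{s=0}^{d2−1} λ_ℓ^{2s}) · (u_ℓ)_j²/t if t < d1;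 Σ_{ℓ=1}^r (Σ_{s=t−d1}^{t−1} λ_ℓ^{2s})/(Σ_{s=0}^{d2−1} λ_ℓ^{2s}) · (u_ℓ)_j²/d1 if d1 ≤ t ≤ d2; and Σ_{ℓ=1}^r (Σ_{s=t−d1}^{d2−1} λ_ℓ^{2s})/(Σ_{s=0}^{d2−1} λ_ℓ^{2s}) · (u_ℓ)_j²/(T+1−t) if t > d2. -/

import Mathlib

noncomputable section

open Matrix

/-- The block Hankel operator. -/
def blockHankel (n d1 d2 T : ℕ) (X : Fin T → Matrix (Fin n) (Fin n) ℝ) :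
    Matrix (Fin d1 × Fin n) (Fin d2 × Fin n) ℝ :=
  Matrix.of fun p q =>
    if h : p.1.val + q.1.val < T then X ⟨p.1.val + q.1.val, h⟩ p.2 q.2 else 0

/-- `Q_T(A) = (A, A², …, A^T)`. -/
def QT (n T : ℕ) (A : Matrix (Fin n) (Fin n) ℝ) : Fin T → Matrix (Fin n) (Fin n) ℝ :=
  fun t => A ^ (t.val + 1)

/-- The Frobenius norm of a real matrix. -/
def frobNorm {α β : Type*} [Fintype α] [Fintype β] (M : Matrix α β ℝ) : ℝ :=
  Real.sqrt (∑ i, ∑ j, (M i j) ^ 2)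

/-- The standard basis tuple `E_{i,j,t}`. -/
def Etuple (n T : ℕ) (i j : Fin n) (t : Fin T) : Fin T → Matrix (Fin n) (Fin n) ℝ :=
  fun s => if s = t then Matrix.single i j 1 else 0

/-- The normalized block Hankel basis matrix `B_{i,j,t}`. -/
def Bmat (n d1 d2 T : ℕ) (i j : Fin n) (t : Fin T) :
    Matrix (Fin d1 × Fin n) (Fin d2 × Fin n) ℝ :=
  (frobNorm (blockHankel n d1 d2 T (Etuple n T i j t)))⁻¹ •
    blockHankel n d1 d2 T (Etuple n T i j t)

/-- The generalized Vandermonde matrix `V_m(U,N)`, stacking `U N^0, …, U N^{m−1}`. -/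
def vandStack (n r m : ℕ) (U : Matrix (Fin n) (Fin r) ℝ) (N : Matrix (Fin r) (Fin r) ℝ) :
    Matrix (Fin m × Fin n) (Fin r) ℝ :=
  Matrix.of fun p l => (U * N ^ p.1.val) p.2 l

/-! `H(E_{i,j,t})` is the 0/1 matrix carrying the unit `(i,j)` on each block of its `t`-th block
antidiagonal, and every block column meets that antidiagonal in at most one block row. Hence
`‖Wᵀ H(E_{i,j,t})‖_F²` is the sum, over the block rows `p` meeting the antidiagonal, of the squared
`i`-th rows of the blocks `W_p`; for `W = U_H` these are `λ_ℓ^{2p} (u_ℓ)_i² / Σ_s λ_ℓ^{2s}`, and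
`‖H(E_{i,j,t})‖_F²` is the number of such rows. The three regimes of `t` only decide which block
rows these are. The formulas for `V_H` follow by transposition, since `B_{i,j,t}ᵀ` is the basis
matrix `B_{j,i,t}` of the transposed `d2 × d1` Hankel shape. -/

section Frobenius

variable {α β : Type*} [Fintype α] [Fintype β]

lemma frobNorm_sq (M : Matrix α β ℝ) : frobNorm M ^ 2 = ∑ i, ∑ j, M i j ^ 2 :=
  Real.sq_sqrt (by positivity)

lemma frobNorm_transpose (M : Matrix α β ℝ) : frobNorm Mᵀ = frobNorm M := by
  rw [frobNorm, frobNorm, Finset.sum_comm]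
  rfl

lemma frobNorm_smul_sq (c : ℝ) (M : Matrix α β ℝ) :
    frobNorm (c • M) ^ 2 = c ^ 2 * frobNorm M ^ 2 := by
  simp only [frobNorm_sq, Finset.mul_sum, Matrix.smul_apply, smul_eq_mul, mul_pow]

end Frobenius

lemma sq_sum_of_card_le_one {ι R : Type*} [CommSemiring R] {s : Finset ι} (hs : s.card ≤ 1)
    (f : ι → R) : (∑ i ∈ s, f i) ^ 2 = ∑ i ∈ s, f i ^ 2 := by
  obtain h | h := Nat.le_one_iff_eq_zero_or_eq_one.mp hs
  · simp [Finset.card_eq_zero.mp h]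
  · obtain ⟨a, rfl⟩ := Finset.card_eq_one.mp h
    simp

/-- The block rows `p < d1` of a `d1 × d2` block Hankel matrix that meet its `τ`-th block
antidiagonal `p + q = τ` (0-based). -/
def antidiagonalRows (d1 d2 τ : ℕ) : Finset ℕ :=
  Finset.Ico (τ + 1 - d2) (min (τ + 1) d1)

lemma mem_antidiagonalRows {d1 d2 τ k : ℕ} :
    k ∈ antidiagonalRows d1 d2 τ ↔ k < d1 ∧ k ≤ τ ∧ τ < k + d2 := by
  rw [antidiagonalRows, Finset.mem_Ico]
  omega

lemma sum_ite_add_eq_sum_antidiagonalRows {M : Type*} [AddCommMonoid M] (d1 d2 τ : ℕ)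
    (f : ℕ → M) :
    ∑ p : Fin d1, ∑ q : Fin d2, (if p.val + q.val = τ then f p else 0)
      = ∑ k ∈ antidiagonalRows d1 d2 τ, f k := by
  have row_sum : ∀ p : Fin d1, ∑ q : Fin d2, (if p.val + q.val = τ then f p else 0)
      = if p.val ∈ antidiagonalRows d1 d2 τ then f p else 0 := by
    intro p
    split_ifs with hp
    · rw [mem_antidiagonalRows] at hp
      rw [Finset.sum_eq_single ⟨τ - p, by omega⟩
        (fun q _ hq => if_neg fun h => hq (by ext; simp; omega)) (by simp), if_pos (by simp; omega)]
    · refine Finset.sum_eq_zero fun q _ => if_neg fun h => hp ?_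
      rw [mem_antidiagonalRows]
      omega
  rw [Finset.sum_congr rfl fun p _ => row_sum p,
    Fin.sum_univ_eq_sum_range (fun k => if k ∈ antidiagonalRows d1 d2 τ then f k else 0),
    Finset.sum_ite_mem, Finset.inter_eq_right.mpr fun k hk => Finset.mem_range.mpr
      (mem_antidiagonalRows.mp hk).1]

section Hankel

variable {n d1 d2 T : ℕ} {κ : Type*}

lemma blockHankel_Etuple_apply (i j : Fin n) (t : Fin T) (p : Fin d1) (a : Fin n)
    (q : Fin d2) (b : Fin n) :
    blockHankel n d1 d2 T (Etuple n T i j t) (p, a) (q, b)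
      = if p.val + q.val = t.val ∧ a = i ∧ b = j then 1 else 0 := by
  simp only [blockHankel, Etuple, of_apply]
  split_ifs <;> simp_all [Fin.ext_iff, Matrix.single_apply, eq_comm]

lemma blockHankel_Etuple_transpose (i j : Fin n) (t : Fin T) :
    (blockHankel n d1 d2 T (Etuple n T i j t))ᵀ = blockHankel n d2 d1 T (Etuple n T j i t) := by
  ext ⟨q, b⟩ ⟨p, a⟩
  simp only [transpose_apply, blockHankel_Etuple_apply, add_comm (q : ℕ), and_comm (a := b = j)]

lemma Bmat_transpose (i j : Fin n) (t : Fin T) :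
    (Bmat n d1 d2 T i j t)ᵀ = Bmat n d2 d1 T j i t := by
  rw [Bmat, Bmat, transpose_smul, blockHankel_Etuple_transpose, ← frobNorm_transpose,
    blockHankel_Etuple_transpose]

lemma frobNorm_Bmat_mul [Fintype κ] (i j : Fin n) (t : Fin T)
    (W : Matrix (Fin d2 × Fin n) κ ℝ) :
    frobNorm (Bmat n d1 d2 T i j t * W) = frobNorm (Wᵀ * Bmat n d2 d1 T j i t) := by
  rw [← frobNorm_transpose, transpose_mul, Bmat_transpose]

lemma frobNorm_blockHankel_Etuple_sq (i j : Fin n) (t : Fin T) :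
    frobNorm (blockHankel n d1 d2 T (Etuple n T i j t)) ^ 2 = (antidiagonalRows d1 d2 t).card := by
  rw [frobNorm_sq]
  simp only [Fintype.sum_prod_type, blockHankel_Etuple_apply, ite_pow, one_pow, ne_eq,
    OfNat.ofNat_ne_zero, not_false_eq_true, zero_pow, ite_and]
  rw [Finset.sum_congr rfl fun p _ => Finset.sum_comm]
  simp only [Finset.sum_ite_irrel, Finset.sum_ite_eq', Finset.mem_univ, if_true,
    Finset.sum_const_zero]
  rw [sum_ite_add_eq_sum_antidiagonalRows d1 d2 t (fun _ => (1 : ℝ)), Finset.sum_const, nsmul_one]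

lemma transpose_mul_blockHankel_Etuple_apply (W : Matrix (Fin d1 × Fin n) κ ℝ)
    (i j : Fin n) (t : Fin T) (l : κ) (q : Fin d2) (b : Fin n) :
    (Wᵀ * blockHankel n d1 d2 T (Etuple n T i j t)) l (q, b)
      = if b = j then ∑ p : Fin d1, if p.val + q.val = t.val then W (p, i) l else 0 else 0 := by
  simp only [mul_apply, Fintype.sum_prod_type, transpose_apply, blockHankel_Etuple_apply,
    ite_and, mul_ite, mul_one, mul_zero, Finset.sum_ite_irrel, Finset.sum_ite_eq',
    Finset.mem_univ, if_true, Finset.sum_const_zero]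
  split_ifs <;> simp

lemma frobNorm_transpose_mul_blockHankel_Etuple_sq [Fintype κ] (W : Matrix (Fin d1 × Fin n) κ ℝ)
    (i j : Fin n) (t : Fin T) :
    frobNorm (Wᵀ * blockHankel n d1 d2 T (Etuple n T i j t)) ^ 2
      = ∑ l, ∑ p : Fin d1, ∑ q : Fin d2, if p.val + q.val = t.val then W (p, i) l ^ 2 else 0 := by
  rw [frobNorm_sq]
  refine Finset.sum_congr rfl fun l _ => ?_
  simp only [Fintype.sum_prod_type, transpose_mul_blockHankel_Etuple_apply, ite_pow, ne_eq,
    OfNat.ofNat_ne_zero, not_false_eq_true, zero_pow, Finset.sum_ite_eq', Finset.mem_univ,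
    if_true]
  rw [Finset.sum_comm]
  refine Finset.sum_congr rfl fun q _ => ?_
  have at_most_one : (Finset.univ.filter fun p : Fin d1 => p.val + q.val = t.val).card ≤ 1 :=
    Finset.card_le_one.mpr fun a ha b hb => by
      simp only [Finset.mem_filter, Finset.mem_univ, true_and] at ha hb
      exact Fin.ext (by omega)
  rw [← Finset.sum_filter, ← Finset.sum_filter, sq_sum_of_card_le_one at_most_one]

end Hankel

lemma vandStack_diagonal_mul_diagonal_apply {n r m : ℕ} (U : Matrix (Fin n) (Fin r) ℝ)
    (lam g : Fin r → ℝ) (p : Fin m) (a : Fin n) (l : Fin r) :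
    (vandStack n r m U (diagonal lam) * diagonal g) (p, a) l = U a l * lam l ^ p.val * g l := by
  simp [vandStack, mul_diagonal, diagonal_pow]

lemma frobNorm_vandStack_transpose_mul_Bmat_sq (n d1 d2 T r : ℕ) (lam : Fin r → ℝ)
    (U : Matrix (Fin n) (Fin r) ℝ) (i j : Fin n) (t : Fin T) :
    frobNorm ((vandStack n r d1 U (diagonal lam) *
        diagonal fun l => (√(∑ s ∈ Finset.range d1, lam l ^ (2 * s)))⁻¹)ᵀ *
        Bmat n d1 d2 T i j t) ^ 2
      = ∑ l, (∑ k ∈ antidiagonalRows d1 d2 t, lam l ^ (2 * k))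
          / (∑ s ∈ Finset.range d1, lam l ^ (2 * s)) * U i l ^ 2
            / (antidiagonalRows d1 d2 t).card := by
  rw [Bmat, Matrix.mul_smul, frobNorm_smul_sq, inv_pow, frobNorm_blockHankel_Etuple_sq,
    frobNorm_transpose_mul_blockHankel_Etuple_sq, Finset.mul_sum]
  simp_rw [vandStack_diagonal_mul_diagonal_apply]
  refine Finset.sum_congr rfl fun l _ => ?_
  set σ := ∑ s ∈ Finset.range d1, lam l ^ (2 * s)
  have hσ : (√σ)⁻¹ ^ 2 = σ⁻¹ := by
    rw [inv_pow, Real.sq_sqrt (Finset.sum_nonneg fun s _ => (even_two_mul s).pow_nonneg _)]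
  have term : ∀ k, (U i l * lam l ^ k * (√σ)⁻¹) ^ 2 = lam l ^ (2 * k) * (U i l ^ 2 / σ) := by
    intro k
    rw [mul_pow, mul_pow, hσ, ← pow_mul, mul_comm k 2]
    ring
  rw [sum_ite_add_eq_sum_antidiagonalRows d1 d2 t fun k => (U i l * lam l ^ k * (√σ)⁻¹) ^ 2,
    Finset.sum_congr rfl fun k _ => term k, ← Finset.sum_mul]
  ring

lemma sum_range_pow_two_mul_pos {m : ℕ} (hm : 0 < m) (x : ℝ) :
    0 < ∑ s ∈ Finset.range m, x ^ (2 * s) :=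
  Finset.sum_pos' (fun s _ => (even_two_mul s).pow_nonneg x) ⟨0, Finset.mem_range.mpr hm, by simp⟩

/-- The paper's time index is 1-based: its `t` is `t.val + 1` here. -/
theorem psd_basis_coherence_formulas_general (n d1 d2 T r : ℕ)
    (hd1 : 2 ≤ d1) (hd12 : d1 ≤ d2) (hT : T = d1 + d2 - 1)
    (lam : Fin r → ℝ)
    (U : Matrix (Fin n) (Fin r) ℝ)
    (i j : Fin n) (t : Fin T) :
    letI UH : Matrix (Fin d1 × Fin n) (Fin r) ℝ :=
      vandStack n r d1 U (Matrix.diagonal lam) *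
        Matrix.diagonal fun l => (Real.sqrt (∑ s ∈ Finset.range d1, lam l ^ (2 * s)))⁻¹
    letI VH : Matrix (Fin d2 × Fin n) (Fin r) ℝ :=
      vandStack n r d2 U (Matrix.diagonal lam) *
        Matrix.diagonal fun l => (Real.sqrt (∑ s ∈ Finset.range d2, lam l ^ (2 * s)))⁻¹
    ((t.val + 1 < d1 →
        frobNorm (UHᵀ * Bmat n d1 d2 T i j t) ^ 2
          = ∑ l, ((∑ s ∈ Finset.range (t.val + 1), lam l ^ (2 * s))
              / (∑ s ∈ Finset.range d1, lam l ^ (2 * s))) * (U i l) ^ 2 / ((t.val : ℝ) + 1)) ∧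
      (d1 ≤ t.val + 1 → t.val + 1 ≤ d2 →
        frobNorm (UHᵀ * Bmat n d1 d2 T i j t) ^ 2
          = ∑ l, (U i l) ^ 2 / (d1 : ℝ)) ∧
      (d2 < t.val + 1 →
        frobNorm (UHᵀ * Bmat n d1 d2 T i j t) ^ 2
          = ∑ l, ((∑ s ∈ Finset.Ico (t.val + 1 - d2) d1, lam l ^ (2 * s))
              / (∑ s ∈ Finset.range d1, lam l ^ (2 * s))) * (U i l) ^ 2
                / ((T : ℝ) - (t.val : ℝ)))) ∧
    ((t.val + 1 < d1 →
        frobNorm (Bmat n d1 d2 T i j t * VH) ^ 2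
          = ∑ l, ((∑ s ∈ Finset.range (t.val + 1), lam l ^ (2 * s))
              / (∑ s ∈ Finset.range d2, lam l ^ (2 * s))) * (U j l) ^ 2 / ((t.val : ℝ) + 1)) ∧
      (d1 ≤ t.val + 1 → t.val + 1 ≤ d2 →
        frobNorm (Bmat n d1 d2 T i j t * VH) ^ 2
          = ∑ l, ((∑ s ∈ Finset.Ico (t.val + 1 - d1) (t.val + 1), lam l ^ (2 * s))
              / (∑ s ∈ Finset.range d2, lam l ^ (2 * s))) * (U j l) ^ 2 / (d1 : ℝ)) ∧
      (d2 < t.val + 1 →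
        frobNorm (Bmat n d1 d2 T i j t * VH) ^ 2
          = ∑ l, ((∑ s ∈ Finset.Ico (t.val + 1 - d1) d2, lam l ^ (2 * s))
              / (∑ s ∈ Finset.range d2, lam l ^ (2 * s))) * (U j l) ^ 2
                / ((T : ℝ) - (t.val : ℝ)))) := by
  have rows_eq (d d' a b : ℕ) (ha : t.val + 1 - d' = a) (hb : min (t.val + 1) d = b) :
      antidiagonalRows d d' t = Finset.Ico a b := by
    rw [antidiagonalRows, ha, hb]
  have card_eq (d d' : ℕ) (h : d + d' = T + 1) (ht : d' ≤ t.val + 1) :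
      (((Finset.Ico (t.val + 1 - d') d).card : ℕ) : ℝ) = (T : ℝ) - t.val := by
    rw [Nat.card_Ico, show d - (t.val + 1 - d') = T - t.val by omega, Nat.cast_sub t.isLt.le]
  rw [frobNorm_Bmat_mul, frobNorm_vandStack_transpose_mul_Bmat_sq,
    frobNorm_vandStack_transpose_mul_Bmat_sq]
  refine ⟨⟨fun h => ?_, fun h h' => ?_, fun h => ?_⟩, ⟨fun h => ?_, fun h h' => ?_, fun h => ?_⟩⟩
  · rw [rows_eq d1 d2 0 (t.val + 1) (by omega) (by omega), ← Finset.range_eq_Ico,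
      Finset.card_range, Nat.cast_succ]
  · rw [rows_eq d1 d2 0 d1 (by omega) (by omega), ← Finset.range_eq_Ico, Finset.card_range]
    refine Finset.sum_congr rfl fun l _ => ?_
    rw [div_self (sum_range_pow_two_mul_pos (by omega) (lam l)).ne', one_mul]
  · rw [rows_eq d1 d2 _ d1 rfl (by omega), card_eq d1 d2 (by omega) h.le]
  · rw [rows_eq d2 d1 0 (t.val + 1) (by omega) (by omega), ← Finset.range_eq_Ico,
      Finset.card_range, Nat.cast_succ]
  · rw [rows_eq d2 d1 _ (t.val + 1) rfl (by omega), Nat.card_Ico,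
      show t.val + 1 - (t.val + 1 - d1) = d1 by omega]
  · rw [rows_eq d2 d1 _ d2 rfl (by omega), card_eq d2 d1 (by omega) (by omega)]

/-- Piecewise formulas for `‖U_H* B_{i,j,t}‖_F²` and `‖B_{i,j,t} V_H‖_F²` for the singular
vector matrices `U_H`, `V_H` of `H(Q_T(A))` of a positive semidefinite transition operator
`A = UΛU*`, for `2 ≤ d1 ≤ d2` (the time index `t` below is 1-based, i.e. `τ = t.val + 1`). -/
theorem psd_basis_coherence_formulas (n d1 d2 T r : ℕ) (hn : 1 ≤ n)
    (hd1 : 2 ≤ d1) (hd12 : d1 ≤ d2) (hT : T = d1 + d2 - 1)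
    (lam : Fin r → ℝ) (hlam : ∀ l, 0 < lam l)
    (U : Matrix (Fin n) (Fin r) ℝ) (hU : Uᵀ * U = 1)
    (A : Matrix (Fin n) (Fin n) ℝ) (hA : A = U * Matrix.diagonal lam * Uᵀ)
    (i j : Fin n) (t : Fin T) :
    letI UH : Matrix (Fin d1 × Fin n) (Fin r) ℝ :=
      vandStack n r d1 U (Matrix.diagonal lam) *
        Matrix.diagonal fun l => (Real.sqrt (∑ s ∈ Finset.range d1, lam l ^ (2 * s)))⁻¹
    letI VH : Matrix (Fin d2 × Fin n) (Fin r) ℝ :=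
      vandStack n r d2 U (Matrix.diagonal lam) *
        Matrix.diagonal fun l => (Real.sqrt (∑ s ∈ Finset.range d2, lam l ^ (2 * s)))⁻¹
    ((t.val + 1 < d1 →
        frobNorm (UHᵀ * Bmat n d1 d2 T i j t) ^ 2
          = ∑ l, ((∑ s ∈ Finset.range (t.val + 1), lam l ^ (2 * s))
              / (∑ s ∈ Finset.range d1, lam l ^ (2 * s))) * (U i l) ^ 2 / ((t.val : ℝ) + 1)) ∧
      (d1 ≤ t.val + 1 → t.val + 1 ≤ d2 →
        frobNorm (UHᵀ * Bmat n d1 d2 T i j t) ^ 2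
          = ∑ l, (U i l) ^ 2 / (d1 : ℝ)) ∧
      (d2 < t.val + 1 →
        frobNorm (UHᵀ * Bmat n d1 d2 T i j t) ^ 2
          = ∑ l, ((∑ s ∈ Finset.Ico (t.val + 1 - d2) d1, lam l ^ (2 * s))
              / (∑ s ∈ Finset.range d1, lam l ^ (2 * s))) * (U i l) ^ 2
                / ((T : ℝ) - (t.val : ℝ)))) ∧
    ((t.val + 1 < d1 →
        frobNorm (Bmat n d1 d2 T i j t * VH) ^ 2
          = ∑ l, ((∑ s ∈ Finset.range (t.val + 1), lam l ^ (2 * s))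
              / (∑ s ∈ Finset.range d2, lam l ^ (2 * s))) * (U j l) ^ 2 / ((t.val : ℝ) + 1)) ∧
      (d1 ≤ t.val + 1 → t.val + 1 ≤ d2 →
        frobNorm (Bmat n d1 d2 T i j t * VH) ^ 2
          = ∑ l, ((∑ s ∈ Finset.Ico (t.val + 1 - d1) (t.val + 1), lam l ^ (2 * s))
              / (∑ s ∈ Finset.range d2, lam l ^ (2 * s))) * (U j l) ^ 2 / (d1 : ℝ)) ∧
      (d2 < t.val + 1 →
        frobNorm (Bmat n d1 d2 T i j t * VH) ^ 2
          = ∑ l, ((∑ s ∈ Finset.Ico (t.val + 1 - d1) d2, lam l ^ (2 * s))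
              / (∑ s ∈ Finset.range d2, lam l ^ (2 * s))) * (U j l) ^ 2
                / ((T : ℝ) - (t.val : ℝ)))) :=
  psd_basis_coherence_formulas_general n d1 d2 T r hd1 hd12 hT lam U i j t

end
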